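/- arXiv:1304.1405 — 3 statements merged into one kernel-verified Lean document; each statement's English description precedes it below -/
import Mathlib

section
/- Let $F$ be a finite field with $q$ elements. If $m > 1$ and there exists an $m \times \ell$ matrix over $F$ that is non-singular by columns, then $\ell \le q$. Conversely (upper-row direction), if $m \le \ell \le q$ then such a matrix exists. -/
/-!
The leading `1 × 1` minors make every first-row entry a unit, and the leading `2 × 2` minors
then make the ratios `A 1 j / A 0 j` pairwise distinct, so there are at most `|F|` columns.
Conversely, for distinct points `x_j` the matrix `(x_j ^ i)` works: each leading minor is a
Vandermonde determinant at distinct points.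
-/

/-- An `m × ℓ` matrix over a commutative ring is *non-singular by columns* if, for every
`k ≤ m` and every strictly increasing choice of `k` columns, the `k × k` determinant formed
from the first `k` rows of `A` and those columns is a unit. -/
def NonsingularByColumns {R : Type*} [CommRing R] {m l : ℕ}
    (A : Matrix (Fin m) (Fin l) R) : Prop :=
  ∀ (k : ℕ) (hk : k ≤ m) (c : Fin k → Fin l), StrictMono c →
    IsUnit (Matrix.det (Matrix.of fun i j : Fin k => A (Fin.castLE hk i) (c j)))

open Matrix

namespace NonsingularByColumns

variable {R : Type*} [CommRing R] {m l : ℕ} {A : Matrix (Fin m) (Fin l) R}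

theorem isUnit_apply_zero (hA : NonsingularByColumns A) (hm : 0 < m) (j : Fin l) :
    IsUnit (A ⟨0, hm⟩ j) := by
  have h := hA 1 hm (fun _ => j) (Subsingleton.strictMono _)
  rwa [det_fin_one] at h

theorem isUnit_det_two (hA : NonsingularByColumns A) (hm : 1 < m) {x y : Fin l} (hxy : x < y) :
    IsUnit (A ⟨0, by omega⟩ x * A ⟨1, hm⟩ y - A ⟨0, by omega⟩ y * A ⟨1, hm⟩ x) := by
  have hc : StrictMono ![x, y] := by
    intro a b hab
    fin_cases a <;> fin_cases b <;> simp_all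
  have h := hA 2 hm ![x, y] hc
  rwa [det_fin_two] at h

theorem injective_div_row_zero {F : Type*} [Field F] {A : Matrix (Fin m) (Fin l) F}
    (hA : NonsingularByColumns A) (hm : 1 < m) :
    Function.Injective fun j => A ⟨1, hm⟩ j / A ⟨0, by omega⟩ j := by
  refine Function.Injective.of_lt_imp_ne fun x y hxy heq => ?_
  have hx := (hA.isUnit_apply_zero (by omega) x).ne_zero
  have hy := (hA.isUnit_apply_zero (by omega) y).ne_zero
  rw [div_eq_div_iff hx hy] at heq
  exact (hA.isUnit_det_two hm hxy).ne_zero (by linear_combination -heq)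

theorem card_le {F : Type*} [Field F] [Fintype F] {A : Matrix (Fin m) (Fin l) F}
    (hA : NonsingularByColumns A) (hm : 1 < m) : l ≤ Fintype.card F := by
  simpa using Fintype.card_le_of_injective _ (hA.injective_div_row_zero hm)

end NonsingularByColumns

theorem nonsingularByColumns_vandermonde {F : Type*} [Field F] {m l : ℕ} {v : Fin l → F}
    (hv : Function.Injective v) : NonsingularByColumns (of fun (i : Fin m) j => v j ^ (i : ℕ)) := by
  intro k hk c hc
  have hminor : (of fun i j : Fin k => v (c j) ^ (Fin.castLE hk i : ℕ)) = (vandermonde (v ∘ c))ᵀ := by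
    ext i j
    simp [vandermonde]
  simp only [of_apply]
  rw [hminor, det_transpose, isUnit_iff_ne_zero, det_vandermonde_ne_zero_iff]
  exact hv.comp hc.injective

theorem stmt_6 {F : Type*} [Field F] [Fintype F] (m l : ℕ) :
    (1 < m → (∃ A : Matrix (Fin m) (Fin l) F, NonsingularByColumns A) →
      l ≤ Fintype.card F) ∧
    (m ≤ l → l ≤ Fintype.card F →
      ∃ A : Matrix (Fin m) (Fin l) F, NonsingularByColumns A) := by
  refine ⟨fun hm ⟨A, hA⟩ => hA.card_le hm, fun _ hl => ?_⟩
  obtain ⟨v⟩ := Function.Embedding.nonempty_of_card_le (α := Fin l) (by simpa using hl)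
  exact ⟨_, nonsingularByColumns_vandermonde v.injective⟩
end

section
/- Let $R$ be a commutative ring and $A = (a_{ij})$ an $m \times \ell$ ($m \le \ell$) upper triangular matrix (i.e., $a_{ij} = 0$ for $j < i$) that is non-singular by columns. Then $a_{ij}$ is a unit of $R$ for all $1 \le i \le m$ and $i \le j \le \ell$. -/
theorem stmt_16 {R : Type*} [CommRing R] {m l : ℕ} (hml : m ≤ l)
    (A : Matrix (Fin m) (Fin l) R)
    (htri : ∀ (i : Fin m) (j : Fin l), (j : ℕ) < (i : ℕ) → A i j = 0)
    (hA : NonsingularByColumns A) :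
    ∀ (i : Fin m) (j : Fin l), (i : ℕ) ≤ (j : ℕ) → IsUnit (A i j) := by
  intro i j hij
  have hk : (i : ℕ) + 1 ≤ m := i.2
  set c : Fin ((i : ℕ) + 1) → Fin l := fun t =>
    if h : (t : ℕ) < (i : ℕ) then ⟨t, by omega⟩ else j with hc
  have hmono : StrictMono c := by
    intro t1 t2 h12
    have h1 : (t1 : ℕ) < (t2 : ℕ) := h12
    have h2 : (t2 : ℕ) ≤ (i : ℕ) := by omega
    simp only [hc]
    by_cases h : (t2 : ℕ) < (i : ℕ)
    · rw [dif_pos h, dif_pos (by omega)]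
      exact h1
    · have ht2 : (t2 : ℕ) = (i : ℕ) := by omega
      rw [dif_neg h, dif_pos (by omega)]
      show (t1 : ℕ) < (j : ℕ)
      omega
  have hdet := hA ((i : ℕ) + 1) hk c hmono
  set M : Matrix (Fin ((i : ℕ) + 1)) (Fin ((i : ℕ) + 1)) R :=
    Matrix.of fun r t => A (Fin.castLE hk r) (c t) with hM
  have hbt : M.BlockTriangular id := by
    intro r t hrt
    have h1 : (t : ℕ) < (r : ℕ) := hrt
    have h2 : (r : ℕ) ≤ (i : ℕ) := by omega
    simp only [hM, hc, Matrix.of_apply]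
    rw [dif_pos (by omega)]
    exact htri _ _ (by simpa using h1)
  rw [Matrix.det_of_upperTriangular hbt] at hdet
  have hlast : IsUnit (M ⟨(i : ℕ), by omega⟩ ⟨(i : ℕ), by omega⟩) := by
    refine isUnit_of_mul_isUnit_left (y := ∏ t ∈ Finset.univ.erase ⟨(i : ℕ), by omega⟩, M t t) ?_
    rwa [← Finset.mul_prod_erase Finset.univ (fun t => M t t) (Finset.mem_univ _)] at hdet
  have : M ⟨(i : ℕ), by omega⟩ ⟨(i : ℕ), by omega⟩ = A i j := by
    simp only [hM, hc, Matrix.of_apply]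
    rw [dif_neg (by omega)]
    exact congrArg (fun x => A x j) (Fin.ext rfl)
  rwa [this] at hlast
end

section
/- Let $R$ be a commutative ring, and let $A$ be an $m \times \ell$ matrix over $R$ ($m \le \ell$) that is non-singular by columns. Then there exists a lower unitriangular $m \times m$ matrix $P$ (with $1$s on the diagonal and zeros above) such that $PA$ is upper triangular, and $PA$ is still non-singular by columns. -/
/-! Row `i` of the eliminating matrix is read off from the Laplace expansion, along its last
column, of the `(i+1) × (i+1)` minor `M_i(j)` built from the first `i+1` rows, the first `i`
columns and column `j`: with `u_i` the leading `i × i` minor, the cofactors divided by `u_i` form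
a row `p` with `p_i = 1` and `(p A)_j = det M_i(j) / u_i`. For `j < i` the minor `M_i(j)` has a
repeated column, so `P A` is upper triangular. Since `P` is lower unitriangular, the first `k`
rows of `P A` are the first `k` rows of `A` multiplied by a unitriangular `k × k` matrix, so all
the minors in the definition are unchanged. -/

open Matrix

namespace Matrix

variable {R : Type*} [CommRing R]

theorem det_submatrix_snoc {α β : Type*} {k : ℕ} (A : Matrix α β R) (r : Fin (k + 1) → α)
    (c : Fin k → β) (j : β) :
    (A.submatrix r (Fin.snoc c j : Fin (k + 1) → β)).det =
      ∑ t : Fin (k + 1),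
        (-1) ^ (t + k : ℕ) * A (r t) j * (A.submatrix (r ∘ t.succAbove) c).det := by
  rw [det_succ_column _ (Fin.last k)]
  simp only [Fin.val_last, submatrix_apply, Fin.snoc_last, Fin.succAbove_last, submatrix_submatrix,
    Function.comp_def, Fin.snoc_castSucc]

theorem det_submatrix_snoc_self {α β : Type*} {k : ℕ} (A : Matrix α β R)
    (r : Fin (k + 1) → α) (c : Fin k → β) (s : Fin k) :
    (A.submatrix r (Fin.snoc c (c s) : Fin (k + 1) → β)).det = 0 :=
  det_zero_of_column_eq (Fin.castSucc_lt_last s).ne fun _ => by simp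

variable {n : ℕ} (B : Matrix (Fin n) (Fin n) R)

/-- Row `i` holds, in columns `0..i`, the last-column cofactors of `M_i(j)` divided by the leading
`i × i` minor (`Ring.inverse` is `0` on non-units). -/
noncomputable def gaussianEliminator : Matrix (Fin n) (Fin n) R :=
  of fun i => Function.extend (Fin.castLE i.isLt) (fun t : Fin (i + 1) =>
    Ring.inverse (B.submatrix (Fin.castLE i.isLt.le) (Fin.castLE i.isLt.le)).det *
      ((-1) ^ (t + i : ℕ) *
        (B.submatrix (Fin.castLE i.isLt ∘ t.succAbove) (Fin.castLE i.isLt.le)).det)) 0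

theorem gaussianEliminator_mul_apply (i j : Fin n) :
    (B.gaussianEliminator * B) i j =
      Ring.inverse (B.submatrix (Fin.castLE i.isLt.le) (Fin.castLE i.isLt.le)).det *
        (B.submatrix (Fin.castLE i.isLt)
          (Fin.snoc (Fin.castLE i.isLt.le) j : Fin (i + 1) → Fin n)).det := by
  rw [det_submatrix_snoc, Finset.mul_sum, mul_apply]
  refine (Fintype.sum_of_injective _ (Fin.castLE_injective i.isLt) _ _ ?_ fun t => ?_).symm
  · rintro t ht
    rw [gaussianEliminator, of_apply, Function.extend_apply' _ _ _ ht, Pi.zero_apply, zero_mul]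
  · rw [gaussianEliminator, of_apply, (Fin.castLE_injective i.isLt).extend_apply]
    ring

theorem isLowerTriangular_gaussianEliminator : B.gaussianEliminator.IsLowerTriangular := by
  intro i t hit
  rw [gaussianEliminator, of_apply, Function.extend_apply', Pi.zero_apply]
  rintro ⟨s, rfl⟩
  have := s.isLt
  simp only [OrderDual.toDual_lt_toDual, Fin.lt_def, Fin.val_castLE] at hit
  omega

theorem gaussianEliminator_apply_self {i : Fin n}
    (hi : IsUnit (B.submatrix (Fin.castLE i.isLt.le) (Fin.castLE i.isLt.le)).det) :
    B.gaussianEliminator i i = 1 := by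
  rw [gaussianEliminator, of_apply]
  refine ((Fin.castLE_injective i.isLt).extend_apply _ (0 : Fin n → R) (Fin.last i)).trans ?_
  rw [Fin.val_last, Even.neg_one_pow ⟨_, rfl⟩, one_mul, Fin.succAbove_last]
  exact Ring.inverse_mul_cancel _ hi

theorem isUpperTriangular_gaussianEliminator_mul :
    (B.gaussianEliminator * B).IsUpperTriangular := by
  intro i j hji
  rw [gaussianEliminator_mul_apply]
  have hj : j = Fin.castLE i.isLt.le ⟨j, hji⟩ := rfl
  rw [hj, det_submatrix_snoc_self, mul_zero]

theorem submatrix_castLE_mul_of_isLowerTriangular {β : Type*} {m k : ℕ} (hk : k ≤ m)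
    {P : Matrix (Fin m) (Fin m) R} (hP : P.IsLowerTriangular) (A : Matrix (Fin m) β R)
    (c : Fin k → β) :
    (P * A).submatrix (Fin.castLE hk) c =
      P.submatrix (Fin.castLE hk) (Fin.castLE hk) * A.submatrix (Fin.castLE hk) c := by
  ext a b
  refine (Fintype.sum_of_injective _ (Fin.castLE_injective hk) _ _ (fun t ht => ?_)
    fun _ => rfl).symm
  have hkt : k ≤ t := by
    by_contra! h
    exact ht ⟨⟨t, h⟩, rfl⟩
  have hat : Fin.castLE hk a < t := Fin.lt_def.2 (a.isLt.trans_le hkt)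
  exact mul_eq_zero_of_left (hP hat) _

end Matrix

theorem NonsingularByColumns.lowerUnitriangular_mul {R : Type*} [CommRing R] {m l : ℕ}
    {P : Matrix (Fin m) (Fin m) R} (hP : P.IsLowerTriangular) (hdiag : ∀ i, P i i = 1)
    {A : Matrix (Fin m) (Fin l) R}
    (hA : NonsingularByColumns A) : NonsingularByColumns (P * A) := by
  intro k hk c hc
  have hPk : (P.submatrix (Fin.castLE hk) (Fin.castLE hk)).IsLowerTriangular := fun i j hij =>
    hP (show Fin.castLE hk i < Fin.castLE hk j from (Fin.castLE_lt_castLE_iff hk).2 hij)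
  have hdet : (P.submatrix (Fin.castLE hk) (Fin.castLE hk)).det = 1 := by
    rw [det_of_isLowerTriangular _ hPk]
    exact Finset.prod_eq_one fun i _ => hdiag _
  change IsUnit ((P * A).submatrix (Fin.castLE hk) c).det
  rw [submatrix_castLE_mul_of_isLowerTriangular hk hP, det_mul, hdet, one_mul]
  exact hA k hk c hc

theorem stmt_17 {R : Type*} [CommRing R] {m l : ℕ} (hml : m ≤ l)
    (A : Matrix (Fin m) (Fin l) R) (hA : NonsingularByColumns A) :
    ∃ P : Matrix (Fin m) (Fin m) R,
      (∀ i, P i i = 1) ∧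
      (∀ i j : Fin m, (i : ℕ) < (j : ℕ) → P i j = 0) ∧
      (∀ (i : Fin m) (j : Fin l), (j : ℕ) < (i : ℕ) → (P * A) i j = 0) ∧
      NonsingularByColumns (P * A) := by
  set B := A.submatrix id (Fin.castLE hml)
  have hdiag (i : Fin m) : B.gaussianEliminator i i = 1 :=
    B.gaussianEliminator_apply_self
      (hA i i.isLt.le (Fin.castLE (i.isLt.le.trans hml)) (Fin.strictMono_castLE _))
  have hP := B.isLowerTriangular_gaussianEliminator
  refine ⟨B.gaussianEliminator, hdiag, fun i j hij => hP hij, fun i j hji => ?_,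
    hA.lowerUnitriangular_mul hP hdiag⟩
  -- the first `m` columns of `P * A` are, by definition, those of `P * B`
  exact B.isUpperTriangular_gaussianEliminator_mul (i := i) (j := ⟨j, hji.trans i.isLt⟩) hji
end
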